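/- If the dependency structure is empty (every feature's preference is unconditional and features are totally ordered locally by strict linear orders), then the induced dominance order on outcomes Fin N → V via single-feature ceteris paribus flips is irreflexive, i.e., a separable CP-net is always consistent. -/
import Mathlib

open Finset

theorem stmt13 {N : ℕ} {V : Type*} [Fintype V]
    (succ : Fin N → V → V → Prop) (h : ∀ i, IsStrictTotalOrder V (succ i)) :
    ∀ s : Fin N → V, ¬ Relation.TransGen
      (fun s t => ∃ i, succ i (s i) (t i) ∧ ∀ j ≠ i, s j = t j) s s := by
  classical
  set d : (Fin N → V) → (Fin N → V) → Prop :=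
    fun s t => ∃ i, succ i (s i) (t i) ∧ ∀ j ≠ i, s j = t j with hd
  set f : (Fin N → V) → ℕ :=
    fun s => ∑ i, (Finset.univ.filter (fun v => succ i (s i) v)).card with hf
  have key : ∀ s t, d s t → f t < f s := by
    intro s t ⟨i, hi, hj⟩
    apply Finset.sum_lt_sum
    · intro j _
      by_cases hji : j = i
      · subst hji
        apply Finset.card_le_card
        intro v hv
        simp only [Finset.mem_filter, Finset.mem_univ, true_and] at hv ⊢
        exact (h j).trans _ _ _ hi hv
      · rw [hj j hji]
    · refine ⟨i, Finset.mem_univ i, ?_⟩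
      apply Finset.card_lt_card
      constructor
      · intro v hv
        simp only [Finset.mem_filter, Finset.mem_univ, true_and] at hv ⊢
        exact (h i).trans _ _ _ hi hv
      · intro hsub
        have : t i ∈ Finset.univ.filter (fun v => succ i (s i) v) := by
          simp [hi]
        have := hsub this
        simp only [Finset.mem_filter, Finset.mem_univ, true_and] at this
        exact (h i).irrefl _ this
  have key2 : ∀ s t, Relation.TransGen d s t → f t < f s := by
    intro s t ht
    induction ht with
    | single h1 => exact key _ _ h1
    | tail h1 h2 ih => exact lt_trans (key _ _ h2) ih
  intro s hs
  exact lt_irrefl _ (key2 s s hs)
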